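/- Let K and H be subgroups of a topological group G, with K strongly neutral and H closed. Then the intersection of the entourages E_V = {(π(x), π(y)) : π(y) ∈ π(Vx)}, over all symmetric open neighborhoods V of the identity, equals the diagonal of the double coset space Z = K\G/H; hence the induced uniformity on Z is separated. -/

import Mathlib

open scoped Pointwise

/-- The quotient topology on the double coset space. -/
instance dosetQuotientTopology {G : Type*} [Group G] [TopologicalSpace G] (K H : Set G) :
    TopologicalSpace (DoubleCoset.Quotient K H) :=
  inferInstanceAs (TopologicalSpace (Quotient (DoubleCoset.setoid K H)))

/-- The entourage `E_V = {(π(x), π(y)) : π(y) ∈ π(Vx)}` on the double coset space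
`Z = K\G/H`, where `π` is the canonical map. -/
def dosetEnt {G : Type*} [Group G] [TopologicalSpace G] (K H : Subgroup G) (V : Set G) :
    Set (DoubleCoset.Quotient (K : Set G) (H : Set G) × DoubleCoset.Quotient (K : Set G) (H : Set G)) :=
  {p | ∃ x : G, p.1 = DoubleCoset.mk K H x ∧ p.2 ∈ DoubleCoset.mk K H '' (V * {x})}

/-!
If `π a ≠ π b`, the closed set `D = b H a⁻¹` misses `K`. Applying strong neutrality twice
yields a symmetric open `W ∋ 1` with `K W K` still disjoint from `D`. But `(π a, π b) ∈ E_W`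
means `b ∈ K W x H` for some `x ∈ K a H`, i.e. `b ∈ K W K a H`, so `K W K` meets `D`.
-/

open Set DoubleCoset

def IsStronglyNeutral {G : Type*} [Group G] [TopologicalSpace G] (K : Set G) : Prop :=
  ∀ O : Set G, IsOpen O → K ⊆ O → ∃ V : Set G, IsOpen V ∧ (1 : G) ∈ V ∧ K * V ⊆ O

namespace IsStronglyNeutral

variable {G : Type*} [Group G] [TopologicalSpace G] [IsTopologicalGroup G] {K : Subgroup G}

theorem exists_mul_mul_subset_mul (hK : IsStronglyNeutral (K : Set G)) {U : Set G}
    (hU : IsOpen U) (hU1 : (1 : G) ∈ U) :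
    ∃ V : Set G, IsOpen V ∧ (1 : G) ∈ V ∧ (K : Set G) * V * K ⊆ U * K := by
  obtain ⟨V, hVo, hV1, hKV⟩ := hK (U * K) hU.mul_right (subset_mul_right _ hU1)
  refine ⟨V, hVo, hV1, ?_⟩
  calc (K : Set G) * V * K ⊆ U * K * K := mul_subset_mul_right hKV
    _ = U * K := by rw [mul_assoc, coe_mul_coe]

theorem exists_mul_disjoint (hK : IsStronglyNeutral (K : Set G)) {D : Set G}
    (hD : IsClosed D) (hKD : Disjoint (K : Set G) D) :
    ∃ U : Set G, IsOpen U ∧ (1 : G) ∈ U ∧ Disjoint (U * K) D := by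
  have hKD' : (K : Set G) ⊆ D⁻¹ᶜ := by
    rw [← inv_coe_set, ← compl_inv, inv_subset_inv]
    exact subset_compl_iff_disjoint_right.2 hKD
  obtain ⟨V, hVo, hV1, hKV⟩ := hK _ hD.inv.isOpen_compl hKD'
  refine ⟨V⁻¹, hVo.inv, by simpa using hV1, subset_compl_iff_disjoint_right.1 ?_⟩
  rw [← inv_coe_set, ← mul_inv_rev, ← inv_inv Dᶜ, inv_subset_inv, compl_inv]
  exact hKV

theorem exists_symmetric_mul_mul_disjoint (hK : IsStronglyNeutral (K : Set G))
    {D : Set G} (hD : IsClosed D) (hKD : Disjoint (K : Set G) D) :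
    ∃ W : Set G, IsOpen W ∧ (1 : G) ∈ W ∧ W⁻¹ = W ∧
      Disjoint ((K : Set G) * W * K) D := by
  obtain ⟨U, hUo, hU1, hUD⟩ := hK.exists_mul_disjoint hD hKD
  obtain ⟨V, hVo, hV1, hKVK⟩ := hK.exists_mul_mul_subset_mul hUo hU1
  refine ⟨V ∩ V⁻¹, hVo.inter hVo.inv, ⟨hV1, by simpa using hV1⟩,
    by rw [inter_inv, inv_inv, inter_comm], hUD.mono_left (Subset.trans ?_ hKVK)⟩
  gcongr
  exact inter_subset_left

end IsStronglyNeutral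

theorem DoubleCoset.disjoint_of_mk_ne {G : Type*} [Group G] {K H : Subgroup G} {a b : G}
    (h : mk K H a ≠ mk K H b) :
    Disjoint (K : Set G) ((fun g => b⁻¹ * g * a) ⁻¹' H) := by
  refine disjoint_left.2 fun k hk hkH => h ?_
  rw [DoubleCoset.eq]
  exact ⟨k, hk, (b⁻¹ * k * a)⁻¹, H.inv_mem hkH, by group⟩

section DoubleCosetEntourage

variable {G : Type*} [Group G] [TopologicalSpace G] {K H : Subgroup G}

theorem diagonal_subset_dosetEnt {V : Set G} (hV : (1 : G) ∈ V) :
    diagonal _ ⊆ dosetEnt K H V := by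
  rintro ⟨z, _⟩ (rfl : z = _)
  exact ⟨z.out, (out_eq' K H z).symm, z.out, ⟨1, hV, z.out, rfl, one_mul _⟩, out_eq' K H z⟩

theorem exists_mem_mul_mul_of_mk_mem_dosetEnt {W : Set G} {a b : G}
    (h : (mk K H a, mk K H b) ∈ dosetEnt K H W) :
    ∃ c ∈ (K : Set G) * W * K, b⁻¹ * c * a ∈ H := by
  obtain ⟨x, hax, y, ⟨w, hw, _, rfl, rfl⟩, hyb⟩ := h
  obtain ⟨k₁, hk₁, h₁, hh₁, rfl⟩ := (DoubleCoset.eq K H a _).1 hax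
  obtain ⟨k₂, hk₂, h₂, hh₂, rfl⟩ := (DoubleCoset.eq K H _ b).1 hyb
  refine ⟨k₂ * w * k₁, mul_mem_mul (mul_mem_mul hk₂ hw) hk₁, ?_⟩
  convert H.inv_mem (H.mul_mem hh₁ hh₂) using 1
  group

end DoubleCosetEntourage

/-- if `K` is strongly neutral and `H` is closed, then the intersection
of the entourages `E_V` over all symmetric open neighborhoods `V` of the identity is
exactly the diagonal of `Z = K\G/H`. -/
theorem stmt_6 {G : Type*} [Group G] [TopologicalSpace G] [IsTopologicalGroup G]
    (K H : Subgroup G)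
    (hK : ∀ O : Set G, IsOpen O → (K : Set G) ⊆ O →
      ∃ V : Set G, IsOpen V ∧ (1 : G) ∈ V ∧ (K : Set G) * V ⊆ O)
    (hH : IsClosed (H : Set G)) :
    ⋂ V ∈ {V : Set G | IsOpen V ∧ (1 : G) ∈ V ∧ V⁻¹ = V}, dosetEnt K H V =
      Set.diagonal (DoubleCoset.Quotient (K : Set G) (H : Set G)) := by
  refine Subset.antisymm (fun p hp => ?_)
    fun p hp => mem_iInter₂.2 fun V hV => diagonal_subset_dosetEnt hV.2.1 hp
  obtain ⟨a, b, rfl⟩ : ∃ a b : G, p = (mk K H a, mk K H b) :=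
    ⟨p.1.out, p.2.out, by rw [out_eq', out_eq']⟩
  by_contra hne
  obtain ⟨W, hWo, hW1, hWs, hWD⟩ :=
    IsStronglyNeutral.exists_symmetric_mul_mul_disjoint hK
      (hH.preimage (by fun_prop)) (disjoint_of_mk_ne hne)
  obtain ⟨c, hc, hcH⟩ :=
    exists_mem_mul_mul_of_mk_mem_dosetEnt (mem_iInter₂.1 hp W ⟨hWo, hW1, hWs⟩)
  exact hWD.ne_of_mem hc hcH rfl
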